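/- arXiv:2510.25592 — 5 statements merged into one kernel-verified Lean document; each statement's English description precedes it below -/
import Mathlib

section
/- For integers n ≥ b ≥ 2 and D ≥ 1, the number of unordered pairs {i,j} of distinct points of [n]^D with max_t |i_t - j_t| ≤ b-1, plus n^D single points, plus 1, equals 1 + n^D + ((2nb - n - b² + b)^D - n^D)/2. Equivalently, the number of 2-weight-limited b-bursts in the L_∞ model on [n]^D is 1 + n^D + ((n(2b-1) - b(b-1))^D - n^D)/2. -/
/-!
Write `x ~ y` for `|x - y| ≤ b - 1` on `[0, n)`. Ordered pairs of points of `[n]^D` within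
`L_∞` distance `b - 1` are `D`-tuples of `~`-related pairs of coordinates, so there are `c^D` of
them, where `c = n(2b - 1) - b(b - 1)` counts the `~`-related pairs in `[0, n)²` (induction on
`n ≥ b`). Among these ordered pairs, the `n^D` diagonal ones are the singletons and every
unordered pair `{i, j}` with `i ≠ j` occurs twice. A binary error vector is the indicator of its
support, so bursts of weight `≤ 2` are the empty set, the `n^D` singletons and these pairs.
-/

open Finset

section FinsetCounting

variable {α : Type*} [Fintype α] {r : α → α → Prop}

lemma Nat.card_setOf_card_le_two_of_refl (hrefl : ∀ i, r i i) :
    Nat.card {s : Finset α | #s ≤ 2 ∧ ∀ i ∈ s, ∀ j ∈ s, r i j}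
      = 1 + Nat.card α
        + Nat.card {s : Finset α | #s = 2 ∧ ∀ i ∈ s, ∀ j ∈ s, r i j} := by
  classical
  simp only [Nat.card_eq_card_toFinset, Set.toFinset_ofPred]
  rw [Nat.card_eq_fintype_card (α := α)]
  have hsmall (s : Finset α) (hs : #s ≤ 1) : ∀ i ∈ s, ∀ j ∈ s, r i j :=
    fun i hi j hj => card_le_one.1 hs i hi j hj ▸ hrefl i
  have hsplit : univ.filter (fun s : Finset α => #s ≤ 2 ∧ ∀ i ∈ s, ∀ j ∈ s, r i j)
      = (univ.filter fun s : Finset α => #s = 0) ∪ (univ.filter fun s => #s = 1)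
        ∪ univ.filter fun s => #s = 2 ∧ ∀ i ∈ s, ∀ j ∈ s, r i j := by
    ext s
    simp only [mem_union, mem_filter, mem_univ, true_and]
    constructor
    · rintro ⟨hs, hr⟩
      obtain h | h | h : #s = 0 ∨ #s = 1 ∨ #s = 2 := by omega
      exacts [.inl (.inl h), .inl (.inr h), .inr ⟨h, hr⟩]
    · rintro ((hs | hs) | ⟨hs, hr⟩)
      exacts [⟨by omega, hsmall s (by omega)⟩, ⟨by omega, hsmall s (by omega)⟩,
        ⟨hs.le, hr⟩]
  rw [hsplit, card_union_of_disjoint, card_union_of_disjoint, univ_filter_card_eq,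
    univ_filter_card_eq, card_powersetCard, card_powersetCard, Finset.card_univ,
    Nat.choose_zero_right, Nat.choose_one_right]
  · exact disjoint_filter.2 fun s _ h0 h1 => by omega
  · exact disjoint_union_left.2
      ⟨disjoint_filter.2 fun s _ h h2 => by omega,
        disjoint_filter.2 fun s _ h h2 => by omega⟩

lemma Nat.card_setOf_rel_eq_card_add_two_mul (hrefl : ∀ i, r i i)
    (hsymm : ∀ i j, r i j → r j i) :
    Nat.card {p : α × α | r p.1 p.2}
      = Nat.card α + 2 * Nat.card {s : Finset α | #s = 2 ∧ ∀ i ∈ s, ∀ j ∈ s, r i j} := by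
  classical
  simp only [Nat.card_eq_card_toFinset, Set.toFinset_ofPred]
  rw [Nat.card_eq_fintype_card (α := α)]
  set U := univ.filter fun s : Finset α => #s = 2 ∧ ∀ i ∈ s, ∀ j ∈ s, r i j
  have hdiag :
      (univ.filter fun p : α × α => r p.1 p.2).filter (fun p => p.1 = p.2) = univ.diag := by
    ext ⟨i, j⟩
    simp only [mem_filter, mem_diag, mem_univ, true_and]
    exact ⟨fun h => h.2, fun h => ⟨h ▸ hrefl i, h⟩⟩
  have hoffDiag : (univ.filter fun p : α × α => r p.1 p.2).filter (fun p => ¬ p.1 = p.2)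
      = U.biUnion offDiag := by
    ext ⟨i, j⟩
    simp only [mem_filter, mem_univ, true_and, mem_biUnion, mem_offDiag, U]
    constructor
    · rintro ⟨hij, hne⟩
      refine ⟨{i, j}, ⟨card_pair hne, ?_⟩, by simp, by simp, hne⟩
      simp only [mem_insert, mem_singleton]
      rintro _ (rfl | rfl) _ (rfl | rfl)
      exacts [hrefl _, hij, hsymm _ _ hij, hrefl _]
    · rintro ⟨s, ⟨-, hs⟩, hi, hj, hne⟩
      exact ⟨hs i hi j hj, hne⟩
  have hdisj : (U : Set (Finset α)).PairwiseDisjoint offDiag := by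
    intro s hs t ht hst
    simp only [coe_filter, mem_univ, true_and, Set.mem_ofPred_eq, U] at hs ht
    refine disjoint_left.mpr fun p hps hpt => hst ?_
    rw [mem_offDiag] at hps hpt
    have hp : #{p.1, p.2} = 2 := card_pair hps.2.2
    rw [← eq_of_subset_of_card_le (insert_subset hps.1 (singleton_subset_iff.2 hps.2.1))
        (by omega),
      eq_of_subset_of_card_le (insert_subset hpt.1 (singleton_subset_iff.2 hpt.2.1)) (by omega)]
  rw [← card_filter_add_card_filter_not (fun p : α × α => p.1 = p.2), hdiag, diag_card,
    Finset.card_univ, hoffDiag, card_biUnion hdisj, sum_congr rfl fun s hs => ?_, sum_const,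
    smul_eq_mul, mul_comm]
  rw [offDiag_card, (mem_filter.1 hs).2.1]

end FinsetCounting

lemma Nat.card_setOf_forall_rel_pi {ι β : Type*} [Finite ι] (R : β → β → Prop) :
    Nat.card {p : (ι → β) × (ι → β) | ∀ t, R (p.1 t) (p.2 t)}
      = Nat.card {q : β × β | R q.1 q.2} ^ Nat.card ι := by
  let e : {p : (ι → β) × (ι → β) | ∀ t, R (p.1 t) (p.2 t)} ≃ (ι → {q : β × β | R q.1 q.2}) :=
    { toFun p t := ⟨(p.1.1 t, p.1.2 t), p.2 t⟩
      invFun f := ⟨(fun t => (f t).1.1, fun t => (f t).1.2), fun t => (f t).2⟩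
      left_inv _ := rfl
      right_inv _ := rfl }
  rw [Nat.card_congr e, Nat.card_fun]

def funZModTwoEquivFinset (α : Type*) [Fintype α] [DecidableEq α] :
    (α → ZMod 2) ≃ Finset α where
  toFun e := univ.filter fun i => e i ≠ 0
  invFun s i := if i ∈ s then 1 else 0
  left_inv e := by
    funext i
    have : ∀ x : ZMod 2, x ≠ 0 → x = 1 := by decide
    by_cases h : e i = 0 <;> simp [h, this]
  right_inv s := by
    ext i
    by_cases h : i ∈ s <;> simp [h]

lemma Nat.card_setOf_funZModTwo {α : Type*} [Fintype α] (P : Finset α → Prop) :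
    Nat.card {e : α → ZMod 2 | P (univ.filter fun i => e i ≠ 0)}
      = Nat.card {s : Finset α | P s} := by
  classical
  exact Nat.card_congr ((funZModTwoEquivFinset α).subtypeEquiv fun _ => Iff.rfl)

section OneDimensional

variable {b n : ℕ}

lemma card_filter_abs_sub_le_range_self (hb : b ≤ n + 1) :
    #((range n).filter fun x : ℕ => |(x : ℤ) - n| ≤ b - 1) = b - 1 := by
  have : (range n).filter (fun x : ℕ => |(x : ℤ) - n| ≤ b - 1) = Ico (n + 1 - b) n := by
    ext x
    simp only [mem_filter, mem_range, mem_Ico, abs_le]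
    omega
  rw [this, Nat.card_Ico]
  omega

/-- Passing from `[0, n)²` to `[0, n + 1)²` adds the `b - 1` close points below the new corner
in its row and in its column, plus the corner itself: `2b - 1` pairs in all. -/
lemma sum_range_abs_sub_le_indicator (hb : 1 ≤ b) (hn : b ≤ n) :
    (∑ x ∈ range n, ∑ y ∈ range n, if |(x : ℤ) - y| ≤ b - 1 then 1 else 0 : ℤ)
      = n * (2 * b - 1) - b * (b - 1) := by
  induction n, hn using Nat.le_induction with
  | base =>
    have hall : ∀ x ∈ range b, ∀ y ∈ range b, |(x : ℤ) - y| ≤ b - 1 := by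
      intro x hx y hy
      simp only [mem_range] at hx hy
      rw [abs_le]
      omega
    rw [sum_congr rfl fun x hx => sum_congr rfl fun y hy => if_pos (hall x hx y hy)]
    simp only [sum_const, card_range, nsmul_eq_mul, mul_one]
    ring
  | succ n hn ih =>
    have hcol : (∑ x ∈ range n, if |(x : ℤ) - n| ≤ b - 1 then 1 else 0 : ℤ) = b - 1 := by
      rw [sum_boole, card_filter_abs_sub_le_range_self (by omega)]
      push_cast [show 1 ≤ b by omega]
      ring
    have hrow : (∑ y ∈ range n, if |(n : ℤ) - y| ≤ b - 1 then 1 else 0 : ℤ) = b - 1 := by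
      simp_rw [abs_sub_comm (n : ℤ)]
      exact hcol
    simp only [sum_range_succ, sum_add_distrib, ih, hrow, hcol, sub_self, abs_zero]
    rw [if_pos (by omega)]
    push_cast
    ring

lemma Nat.card_setOf_abs_sub_le_fin (hb : 1 ≤ b) (hn : b ≤ n) :
    (Nat.card {q : Fin n × Fin n | |((q.1 : ℕ) : ℤ) - ((q.2 : ℕ) : ℤ)| ≤ (b : ℤ) - 1} : ℤ)
      = n * (2 * b - 1) - b * (b - 1) := by
  rw [Nat.card_eq_card_toFinset, Set.toFinset_ofPred, card_filter]
  push_cast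
  rw [Fintype.sum_prod_type, Fin.sum_univ_eq_sum_range (fun x => ∑ y : Fin n,
    if |(x : ℤ) - ((y : ℕ) : ℤ)| ≤ (b : ℤ) - 1 then (1 : ℤ) else 0) n,
    ← sum_range_abs_sub_le_indicator hb hn]
  exact sum_congr rfl fun x _ =>
    Fin.sum_univ_eq_sum_range
      (fun y => if |(x : ℤ) - (y : ℤ)| ≤ (b : ℤ) - 1 then (1 : ℤ) else 0) n

end OneDimensional

theorem stmt_3_general (n b D : ℕ) (hb : 2 ≤ b) (hn : b ≤ n) :
    (1 + (n : ℚ) ^ D +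
        (Nat.card {s : Finset (Fin D → Fin n) | s.card = 2 ∧
          ∀ i ∈ s, ∀ j ∈ s, ∀ t, |((i t : ℕ) : ℤ) - ((j t : ℕ) : ℤ)| ≤ (b : ℤ) - 1} : ℚ)
      = 1 + (n : ℚ) ^ D + (((n : ℚ) * (2 * b - 1) - b * (b - 1)) ^ D - (n : ℚ) ^ D) / 2) ∧
    ((Nat.card {e : (Fin D → Fin n) → ZMod 2 |
        (Finset.univ.filter (fun i => e i ≠ 0)).card ≤ 2 ∧
        ∀ i ∈ Finset.univ.filter (fun i => e i ≠ 0),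
          ∀ j ∈ Finset.univ.filter (fun i => e i ≠ 0),
            ∀ t, |((i t : ℕ) : ℤ) - ((j t : ℕ) : ℤ)| < (b : ℤ)} : ℚ)
      = 1 + (n : ℚ) ^ D + (((n : ℚ) * (2 * b - 1) - b * (b - 1)) ^ D - (n : ℚ) ^ D) / 2) := by
  have hrefl (i : Fin D → Fin n) : ∀ t, |((i t : ℕ) : ℤ) - ((i t : ℕ) : ℤ)| ≤ (b : ℤ) - 1 :=
    fun t => by simp only [sub_self, abs_zero]; omega
  have hsymm (i j : Fin D → Fin n)
      (h : ∀ t, |((i t : ℕ) : ℤ) - ((j t : ℕ) : ℤ)| ≤ (b : ℤ) - 1) :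
      ∀ t, |((j t : ℕ) : ℤ) - ((i t : ℕ) : ℤ)| ≤ (b : ℤ) - 1 :=
    fun t => abs_sub_comm ((j t : ℕ) : ℤ) _ ▸ h t
  have hline :
      (Nat.card {q : Fin n × Fin n | |((q.1 : ℕ) : ℤ) - ((q.2 : ℕ) : ℤ)| ≤ (b : ℤ) - 1} : ℚ)
        = n * (2 * b - 1) - b * (b - 1) := by
    exact_mod_cast Nat.card_setOf_abs_sub_le_fin (by omega) hn
  have hpairs := (Nat.card_setOf_forall_rel_pi (ι := Fin D)
      fun x y : Fin n => |((x : ℕ) : ℤ) - ((y : ℕ) : ℤ)| ≤ (b : ℤ) - 1).symm.trans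
    (Nat.card_setOf_rel_eq_card_add_two_mul hrefl hsymm)
  have hbursts := Nat.card_setOf_funZModTwo (α := Fin D → Fin n) fun s => #s ≤ 2 ∧ ∀ i ∈ s,
    ∀ j ∈ s, ∀ t, |((i t : ℕ) : ℤ) - ((j t : ℕ) : ℤ)| < (b : ℤ)
  simp_rw [← Int.le_sub_one_iff] at hbursts ⊢
  rw [Nat.card_setOf_card_le_two_of_refl hrefl] at hbursts
  simp only [Nat.card_fun, Nat.card_fin] at hpairs hbursts
  replace hpairs := congrArg (Nat.cast : ℕ → ℚ) hpairs
  push_cast at hpairs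
  rw [hline] at hpairs
  rw [hbursts]
  push_cast
  constructor <;> linear_combination -hpairs / 2

/-- For integers `n ≥ b ≥ 2` and `D ≥ 1`: the number of unordered pairs `{i,j}` of
distinct points of `[n]^D` with `max_t |i_t - j_t| ≤ b-1`, plus `n^D` single points,
plus `1`, equals `1 + n^D + ((n(2b-1) - b(b-1))^D - n^D)/2`.  Equivalently, the number
of 2-weight-limited `b`-bursts in the `L_∞` model on `[n]^D` (binary vectors of Hamming
weight at most 2 whose two support positions are within `L_∞` distance `< b`) equals
this same quantity. -/
theorem stmt_3 (n b D : ℕ) (hb : 2 ≤ b) (hn : b ≤ n) (hD : 1 ≤ D) :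
    (1 + (n : ℚ) ^ D +
        (Nat.card {s : Finset (Fin D → Fin n) | s.card = 2 ∧
          ∀ i ∈ s, ∀ j ∈ s, ∀ t, |((i t : ℕ) : ℤ) - ((j t : ℕ) : ℤ)| ≤ (b : ℤ) - 1} : ℚ)
      = 1 + (n : ℚ) ^ D + (((n : ℚ) * (2 * b - 1) - b * (b - 1)) ^ D - (n : ℚ) ^ D) / 2) ∧
    ((Nat.card {e : (Fin D → Fin n) → ZMod 2 |
        (Finset.univ.filter (fun i => e i ≠ 0)).card ≤ 2 ∧
        ∀ i ∈ Finset.univ.filter (fun i => e i ≠ 0),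
          ∀ j ∈ Finset.univ.filter (fun i => e i ≠ 0),
            ∀ t, |((i t : ℕ) : ℤ) - ((j t : ℕ) : ℤ)| < (b : ℤ)} : ℚ)
      = 1 + (n : ℚ) ^ D + (((n : ℚ) * (2 * b - 1) - b * (b - 1)) ^ D - (n : ℚ) ^ D) / 2) :=
  stmt_3_general n b D hb hn
end

section
/- Let C ⊆ F_2^N be a linear code, with N = n^D, that corrects every 2-weight-limited b-burst in the L_∞ model, where n ≥ (2b-1)^{D-1} D(b²-b). Then the excess redundancy of C satisfies ξ(C) ≥ D·log₂(2b-1) - 2. -/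
/-! The cosets of `C` separate the 2-weight-limited bursts, so there are at most `2 ^ r` of them,
`r = N - dim C`. Conversely, each burst is given by an unordered pair of `L_∞`-close positions
(a singleton counting as the pair `{i, i}`), and the ordered close pairs of `[0, n)^D` number `q^D`,
where `q ≥ n(2b-1) - b(b-1)` counts the close pairs of `[0, n)`. By the mean value bound
`a^D - (a - c)^D ≤ D c a^(D-1)` and the hypothesis on `n`, `q^D ≥ (2b-1)^D n^D - n^D`,
hence `(2b-1)^D n^D ≤ 2 ^ (r + 1)`; taking `log₂` and `⌈log₂ N⌉ < log₂ N + 1` gives the bound. -/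

open Finset Module

theorem ncard_le_card_pow_of_sub_notMem {K V : Type*} [Field K] [Finite K] [AddCommGroup V]
    [Module K V] [FiniteDimensional K V] (C : Submodule K V) {S : Set V}
    (hS : ∀ x ∈ S, ∀ y ∈ S, x ≠ y → x - y ∉ C) :
    S.ncard ≤ Nat.card K ^ (finrank K V - finrank K C) := by
  have : Finite (V ⧸ C) := Module.finite_of_finite K
  have hinj : Set.InjOn C.mkQ S := fun x hx y hy hxy => by
    by_contra hne
    exact hS x hx y hy hne ((Submodule.Quotient.eq C).1 hxy)
  calc S.ncard ≤ (Set.univ : Set (V ⧸ C)).ncard :=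
        Set.ncard_le_ncard_of_injOn _ (fun _ _ => Set.mem_univ _) hinj
    _ = Nat.card K ^ (finrank K V - finrank K C) := by
        rw [Set.ncard_univ, Module.natCard_eq_pow_finrank (K := K),
          ← Submodule.finrank_quotient_add_finrank C, Nat.add_sub_cancel]

section WeightTwo

variable {ι M : Type*} [Fintype ι]

def weightTwoBursts [Zero M] [DecidableEq M] (R : ι → ι → Prop) : Set (ι → M) :=
  {e | #{i | e i ≠ 0} ≤ 2 ∧
    ∀ i ∈ ({i | e i ≠ 0} : Finset ι), ∀ j ∈ ({i | e i ≠ 0} : Finset ι), R i j}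

variable (R : ι → ι → Prop) [DecidableRel R]

theorem card_filter_le_ncard_weightTwoBursts [LinearOrder ι] [MulZeroOneClass M] [Nontrivial M]
    [Finite M] [DecidableEq M] (hrefl : ∀ i, R i i) (hsymm : ∀ i j, R i j → R j i) :
    #{p : ι × ι | p.1 ≤ p.2 ∧ R p.1 p.2} ≤ (weightTwoBursts R : Set (ι → M)).ncard := by
  rw [← Set.ncard_coe_finset]
  refine Set.ncard_le_ncard_of_injOn (fun p => ({p.1, p.2} : Set ι).indicator 1) ?_ ?_
  · rintro ⟨i, j⟩ hij
    simp only [coe_filter, mem_univ, true_and, Set.mem_ofPred_eq] at hij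
    have hsupp : ({x | ({i, j} : Set ι).indicator (1 : ι → M) x ≠ 0} : Finset ι) = {i, j} := by
      ext x
      simp [Set.indicator_apply, or_iff_not_imp_left]
    refine ⟨hsupp ▸ card_le_two, ?_⟩
    rw [hsupp]
    simp only [mem_insert, mem_singleton]
    rintro x (rfl | rfl) y (rfl | rfl)
    exacts [hrefl _, hij.2, hsymm _ _ hij.2, hrefl _]
  · rintro ⟨i, j⟩ hij ⟨i', j'⟩ hij' h
    simp only [coe_filter, mem_univ, true_and, Set.mem_ofPred_eq] at hij hij'
    rcases Set.pair_eq_pair_iff.1 (Set.indicator_one_inj M h) with ⟨rfl, rfl⟩ | ⟨rfl, rfl⟩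
    · rfl
    · simp [le_antisymm hij.1 hij'.1]

theorem card_filter_add_card_eq_two_mul [LinearOrder ι] (hrefl : ∀ i, R i i)
    (hsymm : ∀ i j, R i j → R j i) :
    #{p : ι × ι | R p.1 p.2} + Fintype.card ι = 2 * #{p : ι × ι | p.1 ≤ p.2 ∧ R p.1 p.2} := by
  have hunion : univ.filter (fun p : ι × ι => R p.1 p.2) =
      univ.filter (fun p : ι × ι => p.1 ≤ p.2 ∧ R p.1 p.2) ∪
        univ.filter (fun p : ι × ι => p.2 ≤ p.1 ∧ R p.1 p.2) := by
    ext p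
    simp only [mem_filter, mem_univ, true_and, mem_union, ← or_and_right, le_total]
  have hinter : univ.filter (fun p : ι × ι => p.1 ≤ p.2 ∧ R p.1 p.2) ∩
      univ.filter (fun p : ι × ι => p.2 ≤ p.1 ∧ R p.1 p.2) = univ.diag := by
    ext ⟨i, j⟩
    simp only [mem_inter, mem_filter, mem_univ, true_and, mem_diag]
    constructor
    · exact fun h => le_antisymm h.1.1 h.2.1
    · rintro rfl
      exact ⟨⟨le_rfl, hrefl i⟩, le_rfl, hrefl i⟩
  have hswap : #{p : ι × ι | p.2 ≤ p.1 ∧ R p.1 p.2} = #{p : ι × ι | p.1 ≤ p.2 ∧ R p.1 p.2} := by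
    refine card_equiv (Equiv.prodComm ι ι) fun p => ?_
    simp only [mem_filter, mem_univ, true_and, Equiv.prodComm_apply, Prod.fst_swap, Prod.snd_swap]
    exact ⟨fun h => ⟨h.1, hsymm _ _ h.2⟩, fun h => ⟨h.1, hsymm _ _ h.2⟩⟩
  rw [hunion, ← card_univ, ← diag_card univ, ← hinter, card_union_add_card_inter, hswap, two_mul]

theorem card_filter_add_card_le_two_mul_ncard_weightTwoBursts [MulZeroOneClass M] [Nontrivial M]
    [Finite M] [DecidableEq M] (hrefl : ∀ i, R i i) (hsymm : ∀ i j, R i j → R j i) :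
    #{p : ι × ι | R p.1 p.2} + Fintype.card ι ≤ 2 * (weightTwoBursts R : Set (ι → M)).ncard := by
  -- any linear order will do: it only picks one orientation of each unordered pair
  let : LinearOrder ι := LinearOrder.lift' (Fintype.equivFin ι) (Equiv.injective _)
  rw [card_filter_add_card_eq_two_mul R hrefl hsymm]
  exact Nat.mul_le_mul_left 2 (card_filter_le_ncard_weightTwoBursts R hrefl hsymm)

end WeightTwo

theorem card_filter_forall_pi {κ α : Type*} [Fintype κ] [DecidableEq κ] [Fintype α]
    (r : α → α → Prop) [DecidableRel r]
    [DecidablePred fun p : (κ → α) × (κ → α) => ∀ t, r (p.1 t) (p.2 t)] :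
    #{p : (κ → α) × (κ → α) | ∀ t, r (p.1 t) (p.2 t)} =
      #{p : α × α | r p.1 p.2} ^ Fintype.card κ := by
  calc _ = #(Fintype.piFinset fun _ : κ => ({p : α × α | r p.1 p.2} : Finset (α × α))) :=
        card_equiv (Equiv.arrowProdEquivProdArrow κ (fun _ => α) (fun _ => α)).symm (by simp)
    _ = _ := by simp

theorem sum_range_sub_mul_two_le (m n : ℕ) : (∑ x ∈ range n, (m - 1 - x)) * 2 ≤ m * (m - 1) := by
  rw [← sum_range_id_mul_two, ← sum_range_reflect (fun i => i) m]
  refine Nat.mul_le_mul_right 2 (sum_le_sum_of_ne_zero fun x _ hx => ?_)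
  simp only [mem_range]
  omega

theorem card_filter_range_abs_sub_lt (n b x : ℕ) :
    #{y ∈ range n | |(x : ℤ) - (y : ℕ)| < b} = min (x + b) n - (x + 1 - b) := by
  rw [← Nat.card_Ico]
  congr 1
  ext y
  simp only [mem_filter, mem_range, mem_Ico, abs_lt]
  omega

theorem mul_two_mul_sub_one_le_card_abs_sub_lt (n b : ℕ) :
    n * (2 * b - 1) ≤ #{p : Fin n × Fin n | |((p.1 : ℕ) : ℤ) - (p.2 : ℕ)| < b} + b * (b - 1) := by
  have hrows : #{p : Fin n × Fin n | |((p.1 : ℕ) : ℤ) - (p.2 : ℕ)| < b} =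
      ∑ x ∈ range n, #{y ∈ range n | |(x : ℤ) - (y : ℕ)| < b} := by
    simp only [card_filter, Fintype.sum_prod_type]
    rw [← Fin.sum_univ_eq_sum_range]
    exact sum_congr rfl fun x _ =>
      Fin.sum_univ_eq_sum_range (fun y => if |((x : ℕ) : ℤ) - y| < b then 1 else 0) n
  -- a row near an end of `[0, n)` loses `b - 1 - x` resp. `x + b - n` of its `2b - 1` neighbours
  have hdeficit : ∀ x < n,
      2 * b - 1 ≤ min (x + b) n - (x + 1 - b) + ((b - 1 - x) + (x + b - n)) :=
    fun x _ => by omega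
  have hreflect : ∑ x ∈ range n, (x + b - n) = ∑ x ∈ range n, (b - 1 - x) := by
    rw [← sum_range_reflect]
    exact sum_congr rfl fun x hx => by rw [mem_range] at hx; omega
  calc n * (2 * b - 1) = ∑ x ∈ range n, (2 * b - 1) := by simp [mul_comm]
    _ ≤ ∑ x ∈ range n, (min (x + b) n - (x + 1 - b) + ((b - 1 - x) + (x + b - n))) :=
        sum_le_sum fun x hx => hdeficit x (mem_range.1 hx)
    _ = #{p : Fin n × Fin n | |((p.1 : ℕ) : ℤ) - (p.2 : ℕ)| < b} +
          (∑ x ∈ range n, (b - 1 - x)) * 2 := by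
        simp only [sum_add_distrib, hreflect, hrows, card_filter_range_abs_sub_lt]
        ring
    _ ≤ _ := Nat.add_le_add_left (sum_range_sub_mul_two_le b n) _

theorem Nat.add_pow_le_pow_add (x y n : ℕ) :
    (x + y) ^ n ≤ x ^ n + n * y * (x + y) ^ (n - 1) := by
  have h := abs_pow_sub_pow_le ((x + y : ℕ) : ℤ) x n
  rw [Nat.abs_cast, Nat.abs_cast, max_eq_left (by omega)] at h
  push_cast at h
  rw [add_sub_cancel_left, Nat.abs_cast] at h
  zify
  linarith [le_abs_self (((x : ℤ) + y) ^ n - x ^ n)]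

theorem pow_le_card_abs_sub_lt_add (n b D : ℕ) (hb : 1 ≤ b) (hD : 1 ≤ D)
    (hn : (2 * b - 1) ^ (D - 1) * D * (b ^ 2 - b) ≤ n) :
    ((2 * b - 1) * n) ^ D ≤
      #{p : (Fin D → Fin n) × (Fin D → Fin n) | ∀ t, |((p.1 t : ℕ) : ℤ) - (p.2 t : ℕ)| < b} +
        n ^ D := by
  set q := #{p : Fin n × Fin n | |((p.1 : ℕ) : ℤ) - (p.2 : ℕ)| < b}
  have hsq : b * (b - 1) = b ^ 2 - b := by rw [Nat.mul_sub_one, sq]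
  have hfactor : 1 ≤ (2 * b - 1) ^ (D - 1) * D :=
    Nat.one_le_iff_ne_zero.2 (mul_ne_zero (pow_ne_zero _ (by omega)) (by omega))
  have hcn : b * (b - 1) ≤ n := hsq ▸ le_trans (Nat.le_mul_of_pos_left _ hfactor) hn
  have hna : n ≤ (2 * b - 1) * n := Nat.le_mul_of_pos_left n (by omega)
  have hq : (2 * b - 1) * n - b * (b - 1) ≤ q := by
    have := mul_two_mul_sub_one_le_card_abs_sub_lt n b
    rw [mul_comm] at this
    omega
  have htail : D * (b * (b - 1)) * ((2 * b - 1) * n) ^ (D - 1) ≤ n ^ D := by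
    calc D * (b * (b - 1)) * ((2 * b - 1) * n) ^ (D - 1)
        = (2 * b - 1) ^ (D - 1) * D * (b ^ 2 - b) * n ^ (D - 1) := by rw [mul_pow, hsq]; ring
      _ ≤ n * n ^ (D - 1) := Nat.mul_le_mul_right _ hn
      _ = n ^ D := by rw [← pow_succ', Nat.sub_add_cancel hD]
  have hbern := Nat.add_pow_le_pow_add ((2 * b - 1) * n - b * (b - 1)) (b * (b - 1)) D
  rw [Nat.sub_add_cancel (hcn.trans hna)] at hbern
  rw [card_filter_forall_pi (κ := Fin D) (fun x y : Fin n => |((x : ℕ) : ℤ) - (y : ℕ)| < b),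
    Fintype.card_fin]
  calc _ ≤ _ := hbern
    _ ≤ q ^ D + n ^ D := add_le_add (Nat.pow_le_pow_left hq D) htail

theorem logb_sub_two_le_sub_ceil_logb {x N : ℝ} {r : ℕ} (hx : 0 < x) (hN : 0 < N)
    (h : x * N ≤ 2 ^ (r + 1)) : Real.logb 2 x - 2 ≤ r - ⌈Real.logb 2 N⌉ := by
  have hlog := Real.logb_le_logb_of_le one_lt_two (by positivity) h
  rw [Real.logb_mul hx.ne' hN.ne', Real.logb_pow, Real.logb_self_eq_one one_lt_two] at hlog
  have := Int.ceil_lt_add_one (Real.logb 2 N)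
  push_cast at hlog
  linarith

theorem stmt_5_general (n b D : ℕ) (hb : 2 ≤ b) (hD : 1 ≤ D)
    (hn : (2 * b - 1) ^ (D - 1) * D * (b ^ 2 - b) ≤ n)
    (C : Submodule (ZMod 2) ((Fin D → Fin n) → ZMod 2))
    (hcorr : ∀ e₁ ∈ {e : (Fin D → Fin n) → ZMod 2 |
        (Finset.univ.filter (fun i => e i ≠ 0)).card ≤ 2 ∧
        ∀ i ∈ Finset.univ.filter (fun i => e i ≠ 0),
          ∀ j ∈ Finset.univ.filter (fun i => e i ≠ 0),
            ∀ t, |((i t : ℕ) : ℤ) - ((j t : ℕ) : ℤ)| < (b : ℤ)},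
      ∀ e₂ ∈ {e : (Fin D → Fin n) → ZMod 2 |
        (Finset.univ.filter (fun i => e i ≠ 0)).card ≤ 2 ∧
        ∀ i ∈ Finset.univ.filter (fun i => e i ≠ 0),
          ∀ j ∈ Finset.univ.filter (fun i => e i ≠ 0),
            ∀ t, |((i t : ℕ) : ℤ) - ((j t : ℕ) : ℤ)| < (b : ℤ)},
        e₁ ≠ e₂ → e₁ - e₂ ∉ C) :
    ((n : ℝ) ^ D - Module.finrank (ZMod 2) C) - (⌈Real.logb 2 ((n : ℝ) ^ D)⌉ : ℝ)
      ≥ D * Real.logb 2 (2 * (b : ℝ) - 1) - 2 := by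
  set R : (Fin D → Fin n) → (Fin D → Fin n) → Prop :=
    fun i j => ∀ t, |((i t : ℕ) : ℤ) - ((j t : ℕ) : ℤ)| < (b : ℤ)
  have hn0 : 0 < n := by
    have : 0 < (2 * b - 1) ^ (D - 1) * D * (b ^ 2 - b) :=
      Nat.pos_of_ne_zero (mul_ne_zero (mul_ne_zero (pow_ne_zero _ (by omega)) (by omega))
        (Nat.sub_ne_zero_of_lt (by nlinarith)))
    omega
  have hk : finrank (ZMod 2) C ≤ n ^ D := by simpa using C.finrank_le
  have hcosets :
      (weightTwoBursts R : Set (_ → ZMod 2)).ncard ≤ 2 ^ (n ^ D - finrank (ZMod 2) C) := by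
    simpa using ncard_le_card_pow_of_sub_notMem C (S := weightTwoBursts R) hcorr
  have hbursts := card_filter_add_card_le_two_mul_ncard_weightTwoBursts (M := ZMod 2) R
    (fun i t => by rw [sub_self, abs_zero]; omega)
    (fun i j h t => abs_sub_comm ((j t : ℕ) : ℤ) (i t) ▸ h t)
  have hclose := pow_le_card_abs_sub_lt_add n b D (by omega) hD hn
  have hcount : ((2 * b - 1) * n) ^ D ≤ 2 ^ (n ^ D - finrank (ZMod 2) C + 1) :=
    calc ((2 * b - 1) * n) ^ D
        ≤ #{p : _ × _ | R p.1 p.2} + Fintype.card (Fin D → Fin n) := by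
          rwa [Fintype.card_fun, Fintype.card_fin, Fintype.card_fin]
      _ ≤ 2 * 2 ^ (n ^ D - finrank (ZMod 2) C) := hbursts.trans (Nat.mul_le_mul_left 2 hcosets)
      _ = 2 ^ (n ^ D - finrank (ZMod 2) C + 1) := by ring
  have hkey : ((2 * b - 1 : ℕ) : ℝ) ^ D * (n : ℝ) ^ D ≤ 2 ^ (n ^ D - finrank (ZMod 2) C + 1) := by
    rw [← mul_pow]
    exact_mod_cast hcount
  have hlog := logb_sub_two_le_sub_ceil_logb
    (pow_pos (Nat.cast_pos.2 (by omega)) D) (by positivity) hkey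
  rw [Real.logb_pow, Nat.cast_sub (by omega), Nat.cast_sub hk] at hlog
  push_cast at hlog
  linarith

/-- Let `C ⊆ F_2^N` be a linear code, `N = n^D`, that corrects every 2-weight-limited
`b`-burst in the `L_∞` model (all such error vectors lie in distinct cosets of `C`),
where `n ≥ (2b-1)^{D-1} D (b²-b)`.  Then the excess redundancy
`ξ(C) = (N - dim C) - ⌈log₂ N⌉` satisfies `ξ(C) ≥ D log₂(2b-1) - 2`. -/
theorem stmt_5 (n b D : ℕ) (hb : 2 ≤ b) (hD : 1 ≤ D) (hbn : b ≤ n)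
    (hn : (2 * b - 1) ^ (D - 1) * D * (b ^ 2 - b) ≤ n)
    (C : Submodule (ZMod 2) ((Fin D → Fin n) → ZMod 2))
    (hcorr : ∀ e₁ ∈ {e : (Fin D → Fin n) → ZMod 2 |
        (Finset.univ.filter (fun i => e i ≠ 0)).card ≤ 2 ∧
        ∀ i ∈ Finset.univ.filter (fun i => e i ≠ 0),
          ∀ j ∈ Finset.univ.filter (fun i => e i ≠ 0),
            ∀ t, |((i t : ℕ) : ℤ) - ((j t : ℕ) : ℤ)| < (b : ℤ)},
      ∀ e₂ ∈ {e : (Fin D → Fin n) → ZMod 2 |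
        (Finset.univ.filter (fun i => e i ≠ 0)).card ≤ 2 ∧
        ∀ i ∈ Finset.univ.filter (fun i => e i ≠ 0),
          ∀ j ∈ Finset.univ.filter (fun i => e i ≠ 0),
            ∀ t, |((i t : ℕ) : ℤ) - ((j t : ℕ) : ℤ)| < (b : ℤ)},
        e₁ ≠ e₂ → e₁ - e₂ ∉ C) :
    ((n : ℝ) ^ D - Module.finrank (ZMod 2) C) - (⌈Real.logb 2 ((n : ℝ) ^ D)⌉ : ℝ)
      ≥ D * Real.logb 2 (2 * (b : ℝ) - 1) - 2 :=
  stmt_5_general n b D hb hD hn C hcorr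
end

section
/- Let D ≥ 1, b ≥ 2, n ≥ 4D(b-1), and let C ⊆ F_2^N, N = n^D, be a linear code correcting every 2-weight-limited b-burst in the L₁ model. Then ξ(C) ≥ b - 1 + log₂ C(D, b-1) - 3 when D ≥ b-1, and ξ(C) ≥ D + log₂ C(b-1, D) - 3 when D < b-1. -/
/-!
For `u ≠ v` at `L₁`-distance at most `K = b - 1` the vector `e_u + e_v` is a 2-weight-limited
`b`-burst, so these vectors lie in distinct cosets of `C` and there are at most `2 ^ r(C)` of them.
Conversely, every interior point `u` (with `K ≤ u t < n - K`; by Bernoulli there are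
`(n - 2K)^D ≥ n^D / 2` of them since `n ≥ 4DK`) together with every nonzero `δ ∈ ℤ^D` of
`L₁`-norm at most `K` gives such a vector `e_u + e_{u+δ}`, and each vector arises at most twice.
The `δ` with exactly `m = min D K` nonzero entries number `2^m · C(D,m) · C(K,m)`: a sign for each
nonzero entry, and the absolute values are counted by recursion on the first coordinate and the
hockey-stick identity. Taking `log₂` gives `ξ(C) ≥ m + log₂ (C(D,m) · C(K,m)) - 3`.
-/

open Finset

def boundedTuples (D K m : ℕ) : Finset (Fin D → ℕ) :=
  {a ∈ Fintype.piFinset fun _ => range (K + 1) | #{i | a i ≠ 0} = m ∧ ∑ i, a i ≤ K}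

theorem mem_boundedTuples {D K m : ℕ} {a : Fin D → ℕ} :
    a ∈ boundedTuples D K m ↔ #{i | a i ≠ 0} = m ∧ ∑ i, a i ≤ K := by
  refine ⟨fun h => (mem_filter.1 h).2, fun h => mem_filter.2 ⟨?_, h⟩⟩
  exact Fintype.mem_piFinset.2 fun i =>
    mem_range_succ_iff.2 ((single_le_sum (fun j _ => Nat.zero_le (a j)) (mem_univ i)).trans h.2)

theorem boundedTuples_zero (D K : ℕ) : boundedTuples D K 0 = {0} := by
  ext a
  simp +contextual [mem_boundedTuples, funext_iff]

theorem cons_mem_boundedTuples {D K m x : ℕ} {a : Fin D → ℕ} :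
    Fin.cons x a ∈ boundedTuples (D + 1) K (m + if x = 0 then 0 else 1) ↔
      x ≤ K ∧ a ∈ boundedTuples D (K - x) m := by
  simp only [mem_boundedTuples, Fin.card_filter_univ_succ', Fin.cons_zero, Fin.cons_succ,
    Fin.sum_cons]
  split_ifs <;> omega

theorem card_filter_boundedTuples_succ {D K m x : ℕ} (hx : x ≤ K) :
    #{a ∈ boundedTuples (D + 1) K (m + if x = 0 then 0 else 1) | a 0 = x} =
      #(boundedTuples D (K - x) m) := by
  refine card_nbij' Fin.tail (fun a => (Fin.cons x a : Fin (D + 1) → ℕ)) (fun a ha => ?_)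
    (fun a ha => ?_) (fun a ha => ?_) (fun a _ => Fin.tail_cons (α := fun _ => ℕ) x a)
  · obtain ⟨ha, rfl⟩ := mem_filter.1 ha
    rw [← Fin.cons_self_tail a] at ha
    exact (cons_mem_boundedTuples.1 ha).2
  · exact mem_filter.2 ⟨cons_mem_boundedTuples.2 ⟨hx, ha⟩, rfl⟩
  · rw [← (mem_filter.1 ha).2]
    exact Fin.cons_self_tail a

theorem sum_range_choose_eq_choose_succ (K m : ℕ) :
    ∑ j ∈ range K, j.choose m = K.choose (m + 1) := by
  induction K with
  | zero => simp
  | succ K ih => rw [sum_range_succ, ih, Nat.choose_succ_succ', add_comm]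

theorem card_boundedTuples (D K m : ℕ) :
    #(boundedTuples D K m) = D.choose m * K.choose m := by
  induction D generalizing K m with
  | zero =>
    cases m with
    | zero => simp [boundedTuples_zero]
    | succ m => simp [boundedTuples]
  | succ D ih =>
    cases m with
    | zero => simp [boundedTuples_zero]
    | succ m =>
      have hfib : ∀ x ∈ range (K + 1),
          #{a ∈ boundedTuples (D + 1) K (m + 1) | a 0 = x} =
            if x = 0 then D.choose (m + 1) * K.choose (m + 1)
            else D.choose m * (K - x).choose m := by
        intro x hx
        have hxK : x ≤ K := mem_range_succ_iff.1 hx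
        split_ifs with h0
        · subst h0
          simpa [ih] using card_filter_boundedTuples_succ (D := D) (m := m + 1) hxK
        · simpa [h0, ih] using card_filter_boundedTuples_succ (D := D) (m := m) hxK
      rw [card_eq_sum_card_fiberwise (f := fun a => a 0) (t := range (K + 1)) ?_,
        sum_congr rfl hfib, sum_range_succ', if_pos rfl]
      · have hockey : ∑ x ∈ range K, (K - (x + 1)).choose m = K.choose (m + 1) := by
          rw [← sum_range_choose_eq_choose_succ, ← sum_range_reflect]
          refine sum_congr rfl fun x hx => ?_
          have := mem_range.1 hx
          congr 1
          omega
        simp only [Nat.succ_ne_zero, if_false, ← mul_sum, hockey, Nat.choose_succ_succ' D m]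
        ring
      · intro a ha
        exact mem_range_succ_iff.2 ((single_le_sum (fun j _ => Nat.zero_le (a j))
          (mem_univ 0)).trans (mem_boundedTuples.1 ha).2)

noncomputable def nonzeroL1Ball (D K : ℕ) : Finset (Fin D → ℤ) :=
  {δ ∈ Fintype.piFinset fun _ => Icc (-(K : ℤ)) K | δ ≠ 0 ∧ ∑ i, |δ i| ≤ K}

theorem mem_nonzeroL1Ball {D K : ℕ} {δ : Fin D → ℤ} :
    δ ∈ nonzeroL1Ball D K ↔ δ ≠ 0 ∧ ∑ i, |δ i| ≤ K := by
  refine ⟨fun h => (mem_filter.1 h).2, fun h => mem_filter.2 ⟨?_, h⟩⟩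
  exact Fintype.mem_piFinset.2 fun i => mem_Icc.2 <| abs_le.1 <|
    (single_le_sum (fun j _ => abs_nonneg (δ j)) (mem_univ i)).trans h.2

def withSigns {D : ℕ} (a : Fin D → ℕ) (ε : Finset (Fin D)) : Fin D → ℤ :=
  fun i => if i ∈ ε then a i else -a i

theorem abs_withSigns {D : ℕ} (a : Fin D → ℕ) (ε : Finset (Fin D)) (i : Fin D) :
    |withSigns a ε i| = a i := by
  unfold withSigns
  split_ifs <;> simp

theorem withSigns_pos_iff {D : ℕ} {a : Fin D → ℕ} {ε : Finset (Fin D)}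
    (hε : ε ⊆ ({i | a i ≠ 0} : Finset (Fin D))) (i : Fin D) : 0 < withSigns a ε i ↔ i ∈ ε := by
  unfold withSigns
  split_ifs with h
  · simpa [h] using Nat.pos_of_ne_zero (mem_filter.1 (hε h)).2
  · simp [h]

theorem two_pow_mul_card_boundedTuples_le {D K m : ℕ} (hm : m ≠ 0) :
    2 ^ m * #(boundedTuples D K m) ≤ #(nonzeroL1Ball D K) := by
  have hcard : #((boundedTuples D K m).sigma fun a => powerset {i | a i ≠ 0}) =
      2 ^ m * #(boundedTuples D K m) := by
    rw [card_sigma, sum_const_nat fun a ha => by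
      rw [card_powerset, (mem_boundedTuples.1 ha).1], mul_comm]
  rw [← hcard]
  refine card_le_card_of_injOn (fun p => withSigns p.1 p.2) (fun p hp => ?_) ?_
  · obtain ⟨ha, -⟩ := mem_sigma.1 hp
    obtain ⟨hsupp, hsum⟩ := mem_boundedTuples.1 ha
    refine mem_nonzeroL1Ball.2 ⟨fun h0 => ?_, ?_⟩
    · obtain ⟨i, hi⟩ : ({i | p.1 i ≠ 0} : Finset (Fin D)).Nonempty := by
        rw [← card_pos, hsupp]; exact Nat.pos_of_ne_zero hm
      have := abs_withSigns p.1 p.2 i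
      simp only [h0, Pi.zero_apply, abs_zero] at this
      exact (mem_filter.1 hi).2 (by omega)
    · simp only [abs_withSigns]
      exact_mod_cast hsum
  · rintro ⟨a, ε⟩ hp ⟨a', ε'⟩ hp' h
    have hε := mem_powerset.1 (mem_sigma.1 hp).2
    have hε' := mem_powerset.1 (mem_sigma.1 hp').2
    simp only at h hε hε'
    have haa : a = a' := funext fun i => by
      simpa [abs_withSigns] using congrArg (fun δ => |δ i|) h
    subst haa
    have hεε : ε = ε' := by
      ext i
      rw [← withSigns_pos_iff hε, ← withSigns_pos_iff hε', h]
    rw [hεε]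

def closePairs (n D K : ℕ) : Finset ((Fin D → Fin n) × (Fin D → Fin n)) :=
  {p | p.1 ≠ p.2 ∧ ∑ t, |((p.1 t : ℕ) : ℤ) - ((p.2 t : ℕ) : ℤ)| ≤ K}

theorem card_interior_mul_card_nonzeroL1Ball_le (n D K : ℕ) :
    (n - K - K) ^ D * #(nonzeroL1Ball D K) ≤ #(closePairs n D K) := by
  have key := card_le_card_of_surjOn (s := closePairs n D K)
    (t := (Fintype.piFinset fun _ => Ico K (n - K)) ×ˢ nonzeroL1Ball D K)
    (fun p => (fun t => (p.1 t : ℕ), fun t => ((p.2 t : ℕ) : ℤ) - (p.1 t : ℕ))) ?_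
  · rwa [card_product, Fintype.card_piFinset, prod_const, card_univ, Fintype.card_fin,
      Nat.card_Ico] at key
  rintro ⟨w, δ⟩ hwδ
  obtain ⟨hw, hδ⟩ : w ∈ Fintype.piFinset _ ∧ δ ∈ nonzeroL1Ball D K := mem_product.1 hwδ
  obtain ⟨hδ0, hδK⟩ := mem_nonzeroL1Ball.1 hδ
  have hwt : ∀ t, K ≤ w t ∧ w t < n - K := fun t => mem_Ico.1 (Fintype.mem_piFinset.1 hw t)
  have hδt : ∀ t, |δ t| ≤ K := fun t =>
    (single_le_sum (fun j _ => abs_nonneg (δ j)) (mem_univ t)).trans hδK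
  have hshift : ∀ t, 0 ≤ (w t : ℤ) + δ t ∧ (w t : ℤ) + δ t < n := fun t => by
    have := abs_le.1 (hδt t); have := hwt t; omega
  let u : Fin D → Fin n := fun t => ⟨w t, by have := hwt t; omega⟩
  let v : Fin D → Fin n := fun t => ⟨((w t : ℤ) + δ t).toNat, by have := hshift t; omega⟩
  have hvu : ∀ t, ((v t : ℕ) : ℤ) - (u t : ℕ) = δ t := fun t => by
    have := hshift t; simp only [u, v]; omega
  refine ⟨(u, v), mem_filter.2 ⟨mem_univ _, fun huv => hδ0 ?_, ?_⟩, ?_⟩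
  · funext t
    rw [← hvu t, show u = v from huv, sub_self, Pi.zero_apply]
  · show ∑ t, |((u t : ℕ) : ℤ) - (v t : ℕ)| ≤ K
    simpa only [abs_sub_comm _ ((v _ : ℕ) : ℤ), hvu] using hδK
  · exact Prod.ext rfl (funext hvu)

def IsWeightTwoBurst {n D : ℕ} (b : ℕ) (e : (Fin D → Fin n) → ZMod 2) : Prop :=
  #{i | e i ≠ 0} ≤ 2 ∧
    ∀ i ∈ ({i | e i ≠ 0} : Finset _), ∀ j ∈ ({i | e i ≠ 0} : Finset _),
      ∑ t, |((i t : ℕ) : ℤ) - ((j t : ℕ) : ℤ)| < b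

def CorrectsWeightTwoBursts {n D : ℕ} (b : ℕ) (C : Submodule (ZMod 2) ((Fin D → Fin n) → ZMod 2)) :
    Prop :=
  ∀ e₁ e₂, IsWeightTwoBurst b e₁ → IsWeightTwoBurst b e₂ → e₁ ≠ e₂ → e₁ - e₂ ∉ C

theorem filter_indicator_pair_ne_zero {α M : Type*} [Fintype α] [DecidableEq α] [Zero M] [One M]
    [NeZero (1 : M)] [DecidableEq M] (u v : α) :
    ({x | ({u, v} : Set α).indicator (1 : α → M) x ≠ 0} : Finset α) = {u, v} := by
  ext x
  simp [Set.indicator_apply]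
  tauto

theorem Submodule.card_le_natCard_quotient {R V : Type*} [Ring R] [AddCommGroup V] [Module R V]
    (C : Submodule R V) [Finite (V ⧸ C)] (s : Finset V)
    (hs : ∀ x ∈ s, ∀ y ∈ s, x ≠ y → x - y ∉ C) : #s ≤ Nat.card (V ⧸ C) := by
  have := Fintype.ofFinite (V ⧸ C)
  rw [Nat.card_eq_fintype_card, ← card_univ]
  refine card_le_card_of_injOn C.mkQ (fun _ _ => mem_univ _) fun x hx y hy hxy => ?_
  by_contra hne
  exact hs x hx y hy hne ((Submodule.Quotient.eq C).1 hxy)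

theorem indicator_isWeightTwoBurst {n D K : ℕ} {p : (Fin D → Fin n) × (Fin D → Fin n)}
    (hp : p ∈ closePairs n D K) :
    IsWeightTwoBurst (K + 1) (({p.1, p.2} : Set _).indicator 1) := by
  obtain ⟨-, hdist⟩ := (mem_filter.1 hp).2
  unfold IsWeightTwoBurst
  rw [filter_indicator_pair_ne_zero]
  refine ⟨card_le_two, ?_⟩
  simp only [mem_insert, mem_singleton]
  have hdist' : ∑ t, |((p.2 t : ℕ) : ℤ) - ((p.1 t : ℕ) : ℤ)| ≤ K := by
    simpa only [abs_sub_comm _ ((p.1 _ : ℕ) : ℤ)] using hdist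
  rintro i (rfl | rfl) j (rfl | rfl)
  · simp
  · push_cast; omega
  · push_cast; omega
  · simp

theorem CorrectsWeightTwoBursts.card_closePairs_le {n D K : ℕ}
    {C : Submodule (ZMod 2) ((Fin D → Fin n) → ZMod 2)} (hC : CorrectsWeightTwoBursts (K + 1) C) :
    #(closePairs n D K) ≤ 2 * 2 ^ (n ^ D - Module.finrank (ZMod 2) C) := by
  set f : (Fin D → Fin n) × (Fin D → Fin n) → (Fin D → Fin n) → ZMod 2 :=
    fun p => ({p.1, p.2} : Set _).indicator 1
  have hfiber : ∀ e ∈ (closePairs n D K).image f, #{p ∈ closePairs n D K | f p = e} ≤ 2 := by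
    intro e he
    obtain ⟨q, -, rfl⟩ := mem_image.1 he
    refine (card_le_card fun p hp => ?_).trans (card_le_two (a := q) (b := q.swap))
    have hpq := Set.pair_eq_pair_iff.1 (Set.indicator_one_inj (ZMod 2) (mem_filter.1 hp).2)
    rcases hpq with ⟨h1, h2⟩ | ⟨h1, h2⟩
    · exact mem_insert.2 (Or.inl (Prod.ext h1 h2))
    · exact mem_insert.2 (Or.inr (mem_singleton.2 (Prod.ext h1 h2)))
  have hquot :
      Nat.card (((Fin D → Fin n) → ZMod 2) ⧸ C) = 2 ^ (n ^ D - Module.finrank (ZMod 2) C) := by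
    rw [Module.natCard_eq_pow_finrank (K := ZMod 2), Submodule.finrank_quotient,
      Module.finrank_fintype_fun_eq_card]
    simp
  calc #(closePairs n D K) ≤ 2 * #((closePairs n D K).image f) :=
        card_le_mul_card_image _ 2 hfiber
    _ ≤ 2 * 2 ^ (n ^ D - Module.finrank (ZMod 2) C) := by
      rw [← hquot]
      gcongr
      refine C.card_le_natCard_quotient _ fun x hx y hy hxy => ?_
      obtain ⟨p, hp, rfl⟩ := mem_image.1 hx
      obtain ⟨q, hq, rfl⟩ := mem_image.1 hy
      exact hC _ _ (indicator_isWeightTwoBurst hp) (indicator_isWeightTwoBurst hq) hxy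

theorem pow_le_two_mul_sub_pow {x y : ℝ} {D : ℕ} (hy : 0 < y)
    (h : 2 * D * x ≤ y) : y ^ D ≤ 2 * (y - x) ^ D := by
  rcases Nat.eq_zero_or_pos D with rfl | hD
  · norm_num
  have hD1 : (1 : ℝ) ≤ D := by exact_mod_cast hD
  have hxy : D * (x / y) ≤ 1 / 2 := by
    rw [← mul_div_assoc, div_le_iff₀ hy]
    linarith
  have hbern := one_add_mul_le_pow (a := -(x / y)) (by nlinarith) D
  have hsub : y - x = y * (1 + -(x / y)) := by
    field_simp
    ring
  rw [hsub, mul_pow]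
  nlinarith [pow_pos hy D]

theorem le_sub_ceil_logb {x c : ℝ} {m r : ℕ} (hx : 0 < x) (hc : 0 < c)
    (h : x * (2 ^ m * c) ≤ 2 ^ (r + 2)) :
    (m : ℝ) + Real.logb 2 c - 3 ≤ r - ⌈Real.logb 2 x⌉ := by
  have hlog := Real.logb_le_logb_of_le (b := 2) one_lt_two (by positivity) h
  rw [Real.logb_mul hx.ne' (by positivity), Real.logb_mul (by positivity) hc.ne',
    Real.logb_pow, Real.logb_pow, Real.logb_self_eq_one one_lt_two] at hlog
  have := Int.ceil_lt_add_one (Real.logb 2 x)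
  push_cast at hlog
  linarith

theorem le_sub_ceil_logb_of_count {n D K m r c : ℕ} (hD : 1 ≤ D) (hK : 1 ≤ K)
    (hn : 4 * D * K ≤ n) (hc : c ≠ 0) (hcount : (n - K - K) ^ D * (2 ^ m * c) ≤ 2 * 2 ^ r) :
    (m : ℝ) + Real.logb 2 c - 3 ≤ r - ⌈Real.logb 2 ((n : ℝ) ^ D)⌉ := by
  have h4K : 4 * K ≤ n := (Nat.mul_le_mul_right K (by omega : 4 ≤ 4 * D)).trans hn
  have hn0 : (0 : ℝ) < n := by exact_mod_cast (by omega : 0 < n)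
  have hbern : (n : ℝ) ^ D ≤ 2 * ((n - K - K : ℕ) : ℝ) ^ D := by
    rw [Nat.cast_sub (by omega), Nat.cast_sub (by omega), sub_sub, ← two_mul]
    exact pow_le_two_mul_sub_pow hn0 (by exact_mod_cast (by linarith : 2 * D * (2 * K) ≤ n))
  have hcountR : ((n - K - K : ℕ) : ℝ) ^ D * (2 ^ m * c) ≤ 2 * 2 ^ r := by
    exact_mod_cast hcount
  refine le_sub_ceil_logb (pow_pos hn0 D) (by exact_mod_cast Nat.pos_of_ne_zero hc) ?_
  calc (n : ℝ) ^ D * (2 ^ m * c) ≤ 2 * ((n - K - K : ℕ) : ℝ) ^ D * (2 ^ m * c) := by gcongr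
    _ ≤ 2 ^ (r + 2) := by rw [pow_add, mul_assoc]; linarith

theorem CorrectsWeightTwoBursts.sub_sub_pow_mul_le {n D K m : ℕ}
    {C : Submodule (ZMod 2) ((Fin D → Fin n) → ZMod 2)} (hC : CorrectsWeightTwoBursts (K + 1) C)
    (hm : m ≠ 0) :
    (n - K - K) ^ D * (2 ^ m * (D.choose m * K.choose m)) ≤
      2 * 2 ^ (n ^ D - Module.finrank (ZMod 2) C) :=
  calc (n - K - K) ^ D * (2 ^ m * (D.choose m * K.choose m))
      = (n - K - K) ^ D * (2 ^ m * #(boundedTuples D K m)) := by rw [card_boundedTuples]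
    _ ≤ (n - K - K) ^ D * #(nonzeroL1Ball D K) := by
      gcongr
      exact two_pow_mul_card_boundedTuples_le hm
    _ ≤ #(closePairs n D K) := card_interior_mul_card_nonzeroL1Ball_le n D K
    _ ≤ 2 * 2 ^ (n ^ D - Module.finrank (ZMod 2) C) := hC.card_closePairs_le

theorem stmt_12_general (n b D : ℕ) (hb : 2 ≤ b) (hD : 1 ≤ D)
    (hn : 4 * D * (b - 1) ≤ n)
    (C : Submodule (ZMod 2) ((Fin D → Fin n) → ZMod 2))
    (hcorr : ∀ e₁ ∈ {e : (Fin D → Fin n) → ZMod 2 |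
        (Finset.univ.filter (fun i => e i ≠ 0)).card ≤ 2 ∧
        ∀ i ∈ Finset.univ.filter (fun i => e i ≠ 0),
          ∀ j ∈ Finset.univ.filter (fun i => e i ≠ 0),
            ∑ t : Fin D, |((i t : ℕ) : ℤ) - ((j t : ℕ) : ℤ)| < (b : ℤ)},
      ∀ e₂ ∈ {e : (Fin D → Fin n) → ZMod 2 |
        (Finset.univ.filter (fun i => e i ≠ 0)).card ≤ 2 ∧
        ∀ i ∈ Finset.univ.filter (fun i => e i ≠ 0),
          ∀ j ∈ Finset.univ.filter (fun i => e i ≠ 0),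
            ∑ t : Fin D, |((i t : ℕ) : ℤ) - ((j t : ℕ) : ℤ)| < (b : ℤ)},
        e₁ ≠ e₂ → e₁ - e₂ ∉ C) :
    (b - 1 ≤ D →
      ((n : ℝ) ^ D - Module.finrank (ZMod 2) C) - (⌈Real.logb 2 ((n : ℝ) ^ D)⌉ : ℝ)
        ≥ ((b : ℝ) - 1) + Real.logb 2 (D.choose (b - 1)) - 3) ∧
    (D < b - 1 →
      ((n : ℝ) ^ D - Module.finrank (ZMod 2) C) - (⌈Real.logb 2 ((n : ℝ) ^ D)⌉ : ℝ)
        ≥ (D : ℝ) + Real.logb 2 ((b - 1).choose D) - 3) := by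
  obtain ⟨K, rfl⟩ : ∃ K, b = K + 1 := ⟨b - 1, by omega⟩
  simp only [Nat.add_sub_cancel, Nat.cast_add, Nat.cast_one, add_sub_cancel_right] at hn ⊢
  have hC : CorrectsWeightTwoBursts (K + 1) C := fun e₁ e₂ h₁ h₂ => hcorr e₁ h₁ e₂ h₂
  have hr : ((n ^ D - Module.finrank (ZMod 2) C : ℕ) : ℝ) = n ^ D - Module.finrank (ZMod 2) C := by
    rw [Nat.cast_sub (by simpa using C.finrank_le), Nat.cast_pow]
  have key : ∀ m, m ≠ 0 → m ≤ D → m ≤ K → (m : ℝ) + Real.logb 2 (D.choose m * K.choose m : ℕ) - 3 ≤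
      (n ^ D - Module.finrank (ZMod 2) C : ℕ) - ⌈Real.logb 2 ((n : ℝ) ^ D)⌉ :=
    fun m hm hmD hmK => le_sub_ceil_logb_of_count hD (by omega) hn
      (Nat.mul_ne_zero (Nat.choose_pos hmD).ne' (Nat.choose_pos hmK).ne') (hC.sub_sub_pow_mul_le hm)
  rw [← hr]
  refine ⟨fun h => ?_, fun h => ?_⟩
  · simpa [Nat.choose_self] using key K (by omega) h le_rfl
  · simpa [Nat.choose_self] using key D (by omega) le_rfl h.le

/-- Let `D ≥ 1`, `b ≥ 2`, `n ≥ 4D(b-1)`, and let `C ⊆ F_2^N`, `N = n^D`, be a linear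
code correcting every 2-weight-limited `b`-burst in the `L₁` model (all such error
vectors lie in distinct cosets of `C`).  Then the excess redundancy
`ξ(C) = (N - dim C) - ⌈log₂ N⌉` satisfies `ξ(C) ≥ b - 1 + log₂ C(D,b-1) - 3` when
`D ≥ b-1`, and `ξ(C) ≥ D + log₂ C(b-1,D) - 3` when `D < b-1`. -/
theorem stmt_12 (n b D : ℕ) (hb : 2 ≤ b) (hD : 1 ≤ D) (hbn : b ≤ n)
    (hn : 4 * D * (b - 1) ≤ n)
    (C : Submodule (ZMod 2) ((Fin D → Fin n) → ZMod 2))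
    (hcorr : ∀ e₁ ∈ {e : (Fin D → Fin n) → ZMod 2 |
        (Finset.univ.filter (fun i => e i ≠ 0)).card ≤ 2 ∧
        ∀ i ∈ Finset.univ.filter (fun i => e i ≠ 0),
          ∀ j ∈ Finset.univ.filter (fun i => e i ≠ 0),
            ∑ t : Fin D, |((i t : ℕ) : ℤ) - ((j t : ℕ) : ℤ)| < (b : ℤ)},
      ∀ e₂ ∈ {e : (Fin D → Fin n) → ZMod 2 |
        (Finset.univ.filter (fun i => e i ≠ 0)).card ≤ 2 ∧
        ∀ i ∈ Finset.univ.filter (fun i => e i ≠ 0),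
          ∀ j ∈ Finset.univ.filter (fun i => e i ≠ 0),
            ∑ t : Fin D, |((i t : ℕ) : ℤ) - ((j t : ℕ) : ℤ)| < (b : ℤ)},
        e₁ ≠ e₂ → e₁ - e₂ ∉ C) :
    (b - 1 ≤ D →
      ((n : ℝ) ^ D - Module.finrank (ZMod 2) C) - (⌈Real.logb 2 ((n : ℝ) ^ D)⌉ : ℝ)
        ≥ ((b : ℝ) - 1) + Real.logb 2 (D.choose (b - 1)) - 3) ∧
    (D < b - 1 →
      ((n : ℝ) ^ D - Module.finrank (ZMod 2) C) - (⌈Real.logb 2 ((n : ℝ) ^ D)⌉ : ℝ)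
        ≥ (D : ℝ) + Real.logb 2 ((b - 1).choose D) - 3) :=
  stmt_12_general n b D hb hD hn C hcorr
end

section
/- For integers n ≥ b ≥ 2 and D ≥ 1 with N = n^D, the number of 2-weight-limited b-bursts in the straight model satisfies |E_str(b,N)| ≥ ((b-1)/2)·D·n^D. -/
/-!
Call two cells of `[n]^D` adjacent when they lie on an axis-parallel line at distance `< b`.
Every edge `{x, y}` of this graph gives the burst `1_x + 1_y`, and distinct edges give distinct
bursts, so `|E_str(b,N)|` is at least the number of edges. By the handshake lemma twice that number
is the sum of the degrees, and every cell has at least `b - 1` neighbours on each of its `D` lines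
because `n ≥ b`.
-/

open Finset

section Sym2Indicator

variable {V R : Type*} [Zero R] [One R] [DecidableEq V]

def Sym2.indicator (z : Sym2 V) : V → R := fun v => if v ∈ z then 1 else 0

variable [NeZero (1 : R)]

theorem Sym2.indicator_ne_zero_iff (z : Sym2 V) (v : V) :
    Sym2.indicator (R := R) z v ≠ 0 ↔ v ∈ z := by
  by_cases h : v ∈ z <;> simp [Sym2.indicator, h]

theorem Sym2.indicator_injective : Function.Injective (Sym2.indicator (V := V) (R := R)) :=
  fun _ _ h => Sym2.ext fun v => by
    rw [← Sym2.indicator_ne_zero_iff (R := R), ← Sym2.indicator_ne_zero_iff (R := R), h]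

end Sym2Indicator

section PairSupported

variable {V R : Type*} [Fintype V] [Zero R] [One R] [DecidableEq R]

def pairSupported (G : SimpleGraph V) : Set (V → R) :=
  {e | (univ.filter (fun i => e i ≠ 0)).card ≤ 2 ∧
    ∀ i ∈ univ.filter (fun i => e i ≠ 0), ∀ j ∈ univ.filter (fun i => e i ≠ 0), i ≠ j →
      G.Adj i j}

variable [NeZero (1 : R)] [DecidableEq V]

theorem Sym2.indicator_mem_pairSupported {G : SimpleGraph V} {z : Sym2 V}
    (hz : z ∈ G.edgeSet) : Sym2.indicator z ∈ pairSupported (R := R) G := by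
  induction z using Sym2.ind with
  | h x y =>
    have hsupp : univ.filter (fun v => Sym2.indicator (R := R) s(x, y) v ≠ 0) = {x, y} := by
      ext v
      simp [Sym2.indicator_ne_zero_iff]
    rw [pairSupported, Set.mem_ofPred_eq, hsupp]
    refine ⟨card_le_two, ?_⟩
    have hxy : G.Adj x y := hz
    simp only [mem_insert, mem_singleton]
    rintro i (rfl | rfl) j (rfl | rfl) hij
    exacts [absurd rfl hij, hxy, hxy.symm, absurd rfl hij]

theorem card_edgeFinset_le_card_pairSupported [Finite R] (G : SimpleGraph V) [DecidableRel G.Adj] :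
    #G.edgeFinset ≤ Nat.card (pairSupported (R := R) G) := by
  rw [SimpleGraph.edgeFinset_card, ← Nat.card_eq_fintype_card]
  exact Nat.card_le_card_of_injective
    (fun z => ⟨Sym2.indicator z.1, Sym2.indicator_mem_pairSupported z.2⟩)
    fun z w h => Subtype.ext (Sym2.indicator_injective (congrArg Subtype.val h))

end PairSupported

section LineNeighbor

/-- The `d`-th neighbour of `a` in `ℕ`: first `a - 1, a - 2, …, 0`, then `a + 1, a + 2, …`. -/
def lineNeighbor (a d : ℕ) : ℕ := if d < a then a - (d + 1) else d + 1

theorem lineNeighbor_ne (a d : ℕ) : lineNeighbor a d ≠ a := by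
  unfold lineNeighbor; split_ifs <;> omega

theorem lineNeighbor_injective (a : ℕ) : Function.Injective (lineNeighbor a) := by
  intro d d' h
  unfold lineNeighbor at h; split_ifs at h <;> omega

theorem lineNeighbor_lt {a d m : ℕ} (ha : a < m) (hd : d + 1 < m) : lineNeighbor a d < m := by
  unfold lineNeighbor; split_ifs <;> omega

theorem abs_lineNeighbor_sub_le (a d : ℕ) : |(lineNeighbor a d : ℤ) - a| ≤ d + 1 := by
  unfold lineNeighbor; split_ifs <;> rw [abs_le] <;> omega

end LineNeighbor

theorem Function.update_eq_update_iff_of_ne {ι α : Type*} [DecidableEq ι] {f : ι → α} {i j : ι}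
    {a c : α} (ha : a ≠ f i) (h : Function.update f i a = Function.update f j c) :
    i = j ∧ a = c := by
  have hij : i = j := by
    by_contra hij
    have := congrFun h i
    rw [Function.update_self, Function.update_of_ne hij] at this
    exact ha this
  subst hij
  exact ⟨rfl, by simpa using congrFun h i⟩

section StraightGraph

variable {n b D : ℕ}

/-- Cells of `[n]^D` on a common axis-parallel line at distance `< b`. -/
def straightGraph (n b D : ℕ) : SimpleGraph (Fin D → Fin n) where
  Adj i j := ∃ t, i t ≠ j t ∧ (∀ t', t' ≠ t → i t' = j t') ∧
    |((i t : ℕ) : ℤ) - ((j t : ℕ) : ℤ)| ≤ (b : ℤ) - 1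
  symm := ⟨fun _ _ ⟨t, hne, hoff, hdist⟩ =>
    ⟨t, hne.symm, fun t' ht' => (hoff t' ht').symm, by rwa [abs_sub_comm]⟩⟩
  loopless := ⟨fun _ ⟨_, hne, _⟩ => hne rfl⟩

theorem straightGraph_adj {i j : Fin D → Fin n} :
    (straightGraph n b D).Adj i j ↔ ∃ t, i t ≠ j t ∧ (∀ t', t' ≠ t → i t' = j t') ∧
      |((i t : ℕ) : ℤ) - ((j t : ℕ) : ℤ)| ≤ (b : ℤ) - 1 :=
  Iff.rfl

instance : DecidableRel (straightGraph n b D).Adj :=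
  fun _ _ => decidable_of_iff' _ straightGraph_adj

theorem straightGraph_adj_update {x : Fin D → Fin n} {t : Fin D} {a : Fin n} (ha : a ≠ x t)
    (hdist : |((a : ℕ) : ℤ) - ((x t : ℕ) : ℤ)| ≤ (b : ℤ) - 1) :
    (straightGraph n b D).Adj (Function.update x t a) x :=
  straightGraph_adj.mpr
    ⟨t, by simpa using ha, fun t' ht' => Function.update_of_ne ht' a x, by simpa using hdist⟩

theorem mul_le_degree_straightGraph (hn : b ≤ n) (x : Fin D → Fin n) :
    D * (b - 1) ≤ (straightGraph n b D).degree x := by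
  let c : Fin D × Fin (b - 1) → Fin n := fun p =>
    ⟨lineNeighbor (x p.1) p.2, lineNeighbor_lt (x p.1).isLt (by omega)⟩
  let neighbor : Fin D × Fin (b - 1) → Fin D → Fin n := fun p => Function.update x p.1 (c p)
  have hne : ∀ p, c p ≠ x p.1 := fun p h => lineNeighbor_ne _ _ (congrArg Fin.val h)
  rw [← SimpleGraph.card_neighborFinset_eq_degree]
  calc D * (b - 1) = #(univ : Finset (Fin D × Fin (b - 1))) := by simp
    _ ≤ _ := by
      refine card_le_card_of_injOn neighbor (fun p _ => ?_) ?_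
      · rw [mem_coe, SimpleGraph.mem_neighborFinset]
        refine (straightGraph_adj_update (hne p) ?_).symm
        have hb : (p.2 : ℤ) + 1 ≤ b - 1 := by have := p.2.isLt; omega
        exact (abs_lineNeighbor_sub_le (x p.1) p.2).trans hb
      · rintro ⟨t, d⟩ - ⟨t', d'⟩ - h
        obtain ⟨rfl, hd⟩ := Function.update_eq_update_iff_of_ne (hne (t, d)) h
        simpa using Fin.ext (lineNeighbor_injective _ (congrArg Fin.val hd))

theorem mul_le_two_mul_card_edgeFinset_straightGraph (hn : b ≤ n) :
    D * (b - 1) * n ^ D ≤ 2 * #(straightGraph n b D).edgeFinset := by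
  rw [← SimpleGraph.sum_degrees_eq_twice_card_edges]
  calc D * (b - 1) * n ^ D = ∑ _x : Fin D → Fin n, D * (b - 1) := by simp [mul_comm]
    _ ≤ _ := sum_le_sum fun x _ => mul_le_degree_straightGraph hn x

end StraightGraph

theorem stmt_14_general (n b D : ℕ) (hn : b ≤ n) :
    (Nat.card {e : (Fin D → Fin n) → ZMod 2 |
        (Finset.univ.filter (fun i => e i ≠ 0)).card ≤ 2 ∧
        ∀ i ∈ Finset.univ.filter (fun i => e i ≠ 0),
          ∀ j ∈ Finset.univ.filter (fun i => e i ≠ 0), i ≠ j →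
            ∃ t, i t ≠ j t ∧ (∀ t', t' ≠ t → i t' = j t') ∧
              |((i t : ℕ) : ℤ) - ((j t : ℕ) : ℤ)| ≤ (b : ℤ) - 1} : ℚ)
      ≥ (((b : ℚ) - 1) / 2) * D * (n : ℚ) ^ D := by
  have hnat : D * (b - 1) * n ^ D ≤ 2 * Nat.card (pairSupported (R := ZMod 2)
      (straightGraph n b D)) :=
    (mul_le_two_mul_card_edgeFinset_straightGraph hn).trans
      (Nat.mul_le_mul_left 2 (card_edgeFinset_le_card_pairSupported _))
  have hq : ((D * (b - 1) * n ^ D : ℕ) : ℚ) ≤ 2 * Nat.card (pairSupported (R := ZMod 2)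
      (straightGraph n b D)) := by exact_mod_cast hnat
  have hb : (b : ℚ) - 1 ≤ ((b - 1 : ℕ) : ℚ) := by
    rw [sub_le_iff_le_add]; exact_mod_cast (by omega : b ≤ b - 1 + 1)
  have hpos : (0 : ℚ) ≤ D * (n : ℚ) ^ D := by positivity
  show _ ≤ ((Nat.card (pairSupported (R := ZMod 2) (straightGraph n b D)) : ℕ) : ℚ)
  push_cast at hq
  nlinarith

/-- For integers `n ≥ b ≥ 2` and `D ≥ 1`, the number of 2-weight-limited `b`-bursts
in the straight model on `[n]^D` (binary vectors of Hamming weight at most 2 whose two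
support positions, if distinct, lie on an axis-parallel line at distance `< b`)
satisfies `|E_str(b,N)| ≥ ((b-1)/2) D n^D`. -/
theorem stmt_14 (n b D : ℕ) (hb : 2 ≤ b) (hn : b ≤ n) (hD : 1 ≤ D) :
    (Nat.card {e : (Fin D → Fin n) → ZMod 2 |
        (Finset.univ.filter (fun i => e i ≠ 0)).card ≤ 2 ∧
        ∀ i ∈ Finset.univ.filter (fun i => e i ≠ 0),
          ∀ j ∈ Finset.univ.filter (fun i => e i ≠ 0), i ≠ j →
            ∃ t, i t ≠ j t ∧ (∀ t', t' ≠ t → i t' = j t') ∧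
              |((i t : ℕ) : ℤ) - ((j t : ℕ) : ℤ)| ≤ (b : ℤ) - 1} : ℚ)
      ≥ (((b : ℚ) - 1) / 2) * D * (n : ℚ) ^ D :=
  stmt_14_general n b D hn
end

section
/- Let D ≥ 1 and n ≥ b ≥ 2, and let C ⊆ F_2^N, N = n^D, be a linear code correcting every 2-weight-limited b-burst in the straight model. Then its excess redundancy satisfies ξ(C) ≥ log₂(b-1) + log₂ D - 2. Moreover, if n ≥ D(b²-b)/2, then ξ(C) ≥ log₂(b-1) + log₂ D - 1. -/
/-!
Weight-one vectors and weight-two `b`-bursts are all correctable, so they lie in distinct cosets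
of `C` and there are at most `2 ^ r` of them, `r = N - dim C`. A weight-two burst is fixed by an
axis `t`, a length `1 ≤ d ≤ b - 1` and its upper cell `y` with `d ≤ y t`; there are
`(n - d) n ^ (D - 1)` such `y`, so there are `D n ^ (D - 1) ((b - 1) n - b (b - 1) / 2)` bursts.
For `b ≤ n` this is at least `(b - 1) D N / 2`, and adding the `N` weight-one vectors gives at
least `(b - 1) D N` once `n ≥ D b (b - 1) / 2`. Taking `log₂` and using `⌈log₂ N⌉ < log₂ N + 1`
gives both bounds.
-/

open Finset

section General

variable {ι α : Type*} [Fintype ι] [DecidableEq ι] [Fintype α] [DecidableEq α]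

lemma card_filter_apply_mem (s : Finset α) (t : ι) :
    #{f : ι → α | f t ∈ s} = #s * Fintype.card α ^ (Fintype.card ι - 1) := by
  rw [← Fintype.piFinset_univ,
    ← Fintype.piFinset_update_eq_filter_piFinset_mem _ t (subset_univ s), Fintype.card_piFinset,
    ← prod_erase_mul _ _ (mem_univ t),
    prod_congr rfl fun i hi => by rw [Function.update_of_ne (ne_of_mem_erase hi)], prod_const,
    card_erase_of_mem (mem_univ t)]
  simp [mul_comm]

lemma Fin.card_filter_le_val (n d : ℕ) : #{u : Fin n | d ≤ (u : ℕ)} = n - d := by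
  have := card_filter_add_card_filter_not (s := (univ : Finset (Fin n))) (fun u => (u : ℕ) < d)
  rw [Fin.card_filter_val_lt, card_univ, Fintype.card_fin] at this
  simp only [not_lt] at this
  omega

lemma two_mul_sum_Icc_sub_add_mul (n c : ℕ) (hc : c ≤ n) :
    2 * ∑ d ∈ Icc 1 c, (n - d) + c * (c + 1) = 2 * n * c := by
  induction c with
  | zero => simp
  | succ c ih =>
    rw [sum_Icc_succ_top (by omega), mul_add, add_right_comm]
    have := ih (by omega)
    zify [hc, (by omega : c ≤ n)] at this ⊢
    linear_combination this

variable {K V : Type*} [Field K] [Finite K] [AddCommGroup V] [Module K V] [Module.Finite K V]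

lemma Submodule.card_le_of_sub_notMem (C : Submodule K V) (S : Finset V)
    (hS : ∀ e₁ ∈ S, ∀ e₂ ∈ S, e₁ ≠ e₂ → e₁ - e₂ ∉ C) :
    #S ≤ Nat.card K ^ (Module.finrank K V - Module.finrank K C) := by
  classical
  have : Finite V := Module.finite_of_finite K
  have : Finite (V ⧸ C) := Finite.of_surjective _ C.mkQ_surjective
  have : Fintype (V ⧸ C) := Fintype.ofFinite _
  rw [← C.finrank_quotient, ← Module.natCard_eq_pow_finrank, Nat.card_eq_fintype_card,
    ← card_univ]
  refine card_le_card_of_injOn C.mkQ (fun _ _ => mem_univ _) fun e₁ h₁ e₂ h₂ he => ?_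
  by_contra hne
  exact hS e₁ h₁ e₂ h₂ hne ((Submodule.Quotient.eq C).1 he)

end General

section Single

variable {ι M : Type*} [DecidableEq ι] [AddMonoidWithOne M] [NeZero (1 : M)]

lemma support_single_one_add_single_one {x y : ι} (hxy : x ≠ y) :
    Function.support (Pi.single x 1 + Pi.single y 1 : ι → M) = {x, y} := by
  ext i
  by_cases hx : i = x <;> by_cases hy : i = y <;> simp_all

lemma injOn_single_one_add_single_one [PartialOrder ι] :
    Set.InjOn (fun p : ι × ι => (Pi.single p.1 1 + Pi.single p.2 1 : ι → M)) {p | p.1 < p.2} := by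
  rintro ⟨x, y⟩ (hxy : x < y) ⟨x', y'⟩ (hxy' : x' < y') he
  have hsupp := congrArg Function.support he
  simp only [support_single_one_add_single_one hxy.ne,
    support_single_one_add_single_one hxy'.ne] at hsupp
  rcases Set.pair_eq_pair_iff.1 hsupp with ⟨rfl, rfl⟩ | ⟨rfl, rfl⟩
  · rfl
  · exact (lt_asymm hxy hxy').elim

variable [Fintype ι] [DecidableEq M]

lemma filter_single_one_ne_zero (x : ι) :
    ({i | (Pi.single x 1 : ι → M) i ≠ 0} : Finset ι) = {x} := by
  ext i
  by_cases h : i = x <;> simp [Pi.single_apply, h]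

lemma filter_single_one_add_single_one_ne_zero {x y : ι} (hxy : x ≠ y) :
    ({i | (Pi.single x 1 + Pi.single y 1 : ι → M) i ≠ 0} : Finset ι) = {x, y} := by
  rw [← coe_inj, coe_filter_univ]
  push_cast
  exact support_single_one_add_single_one hxy

end Single

namespace StraightBurst

variable {n D b : ℕ}

def LineAdj (b : ℕ) (i j : Fin D → Fin n) : Prop :=
  ∃ t, i t ≠ j t ∧ (∀ t', t' ≠ t → i t' = j t') ∧
    |((i t : ℕ) : ℤ) - ((j t : ℕ) : ℤ)| ≤ (b : ℤ) - 1

lemma LineAdj.symm {i j : Fin D → Fin n} (h : LineAdj b i j) : LineAdj b j i := by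
  obtain ⟨t, hne, heq, hdist⟩ := h
  exact ⟨t, hne.symm, fun t' ht' => (heq t' ht').symm, by rwa [abs_sub_comm]⟩

-- A 2-weight-limited `b`-burst in the straight model.
def IsBurst (b : ℕ) (e : (Fin D → Fin n) → ZMod 2) : Prop :=
  (Finset.univ.filter (fun i => e i ≠ 0)).card ≤ 2 ∧
  ∀ i ∈ Finset.univ.filter (fun i => e i ≠ 0),
    ∀ j ∈ Finset.univ.filter (fun i => e i ≠ 0), i ≠ j → LineAdj b i j

lemma isBurst_single (x : Fin D → Fin n) : IsBurst b (Pi.single x 1) := by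
  refine ⟨by simp [filter_single_one_ne_zero], fun i hi j hj hij => ?_⟩
  simp only [filter_single_one_ne_zero, mem_singleton] at hi hj
  exact (hij (hi.trans hj.symm)).elim

lemma isBurst_single_add_single {x y : Fin D → Fin n} (hxy : x ≠ y) (h : LineAdj b x y) :
    IsBurst b (Pi.single x 1 + Pi.single y 1) := by
  simp only [IsBurst, filter_single_one_add_single_one_ne_zero hxy]
  refine ⟨card_le_two, fun i hi j hj hij => ?_⟩
  simp only [mem_insert, mem_singleton] at hi hj
  rcases hi with rfl | rfl <;> rcases hj with rfl | rfl
  exacts [(hij rfl).elim, h, h.symm, (hij rfl).elim]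

-- Truncated at `0`: only meaningful for `d ≤ y t`.
def lowerShift (t : Fin D) (d : ℕ) (y : Fin D → Fin n) : Fin D → Fin n :=
  Function.update y t ⟨y t - d, (Nat.sub_le _ _).trans_lt (y t).isLt⟩

lemma lowerShift_apply_self (t : Fin D) (d : ℕ) (y : Fin D → Fin n) :
    (lowerShift t d y t : ℕ) = y t - d := by
  simp [lowerShift]

lemma lowerShift_apply_of_ne {t t' : Fin D} (h : t' ≠ t) (d : ℕ) (y : Fin D → Fin n) :
    lowerShift t d y t' = y t' :=
  Function.update_of_ne h _ _

lemma lowerShift_lt {t : Fin D} {d : ℕ} {y : Fin D → Fin n} (hd : 0 < d) (hdy : d ≤ y t) :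
    lowerShift t d y < y := by
  refine Pi.lt_def.2 ⟨fun t' => ?_, t, ?_⟩
  · rcases eq_or_ne t' t with rfl | ht'
    · exact Fin.le_def.2 (by rw [lowerShift_apply_self]; omega)
    · exact (lowerShift_apply_of_ne ht' d y).le
  · exact Fin.lt_def.2 (by rw [lowerShift_apply_self]; omega)

lemma lineAdj_lowerShift {t : Fin D} {d : ℕ} {y : Fin D → Fin n} (hd : 0 < d) (hdb : d ≤ b - 1)
    (hdy : d ≤ y t) : LineAdj b (lowerShift t d y) y := by
  refine ⟨t, fun h => ?_, fun t' ht' => lowerShift_apply_of_ne ht' d y, ?_⟩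
  · have := congrArg Fin.val h
    rw [lowerShift_apply_self] at this
    omega
  · rw [lowerShift_apply_self, Nat.cast_sub hdy, abs_of_nonpos (by omega)]
    omega

lemma injOn_lowerShift :
    Set.InjOn (fun p : (_ : Fin D × ℕ) × (Fin D → Fin n) => (lowerShift p.1.1 p.1.2 p.2, p.2))
      {p | 0 < p.1.2 ∧ p.1.2 ≤ p.2 p.1.1} := by
  rintro ⟨⟨t, d⟩, y⟩ ⟨hd, hdy⟩ ⟨⟨t', d'⟩, y'⟩ ⟨hd', hdy'⟩ he
  obtain ⟨hx, hy⟩ := Prod.mk.inj he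
  dsimp only at hd hdy hd' hdy' hx hy
  subst hy
  have hxt := congrArg (fun x => (x t : ℕ)) hx
  obtain rfl : t = t' := by
    by_contra htt
    simp only [lowerShift_apply_self, lowerShift_apply_of_ne htt] at hxt
    omega
  simp only [lowerShift_apply_self] at hxt
  obtain rfl : d = d' := by omega
  rfl

-- `⟨(t, d), y⟩` indexes the burst on the cells `lowerShift t d y` and `y`.
def pairIndex (n D b : ℕ) : Finset ((_ : Fin D × ℕ) × (Fin D → Fin n)) :=
  (univ ×ˢ Icc 1 (b - 1)).sigma fun td => {y | td.2 ≤ y td.1}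

lemma card_pairIndex :
    #(pairIndex n D b) = D * (∑ d ∈ Icc 1 (b - 1), (n - d)) * n ^ (D - 1) := by
  have hfiber (t : Fin D) (d : ℕ) : #{y : Fin D → Fin n | d ≤ y t} = (n - d) * n ^ (D - 1) := by
    simpa [Fin.card_filter_le_val] using card_filter_apply_mem {u : Fin n | d ≤ (u : ℕ)} t
  simp only [pairIndex, card_sigma, sum_product, hfiber, ← sum_mul, sum_const, card_univ,
    Fintype.card_fin, smul_eq_mul, mul_assoc]

lemma mem_pairIndex {p : (_ : Fin D × ℕ) × (Fin D → Fin n)} :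
    p ∈ pairIndex n D b ↔ 1 ≤ p.1.2 ∧ p.1.2 ≤ b - 1 ∧ p.1.2 ≤ p.2 p.1.1 := by
  simp [pairIndex, and_assoc]

def pairBursts (n D b : ℕ) : Finset ((Fin D → Fin n) → ZMod 2) :=
  (pairIndex n D b).image fun p => Pi.single (lowerShift p.1.1 p.1.2 p.2) 1 + Pi.single p.2 1

lemma card_pairBursts : #(pairBursts n D b) = #(pairIndex n D b) := by
  refine card_image_of_injOn ((injOn_single_one_add_single_one.comp injOn_lowerShift
    fun p hp => lowerShift_lt hp.1 hp.2).mono fun p hp => ?_)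
  obtain ⟨hd, -, hdy⟩ := mem_pairIndex.1 hp
  exact ⟨hd, hdy⟩

lemma isBurst_of_mem_pairBursts {e : (Fin D → Fin n) → ZMod 2} (he : e ∈ pairBursts n D b) :
    IsBurst b e := by
  obtain ⟨⟨⟨t, d⟩, y⟩, hp, rfl⟩ := mem_image.1 he
  obtain ⟨hd, hdb, hdy⟩ := mem_pairIndex.1 hp
  exact isBurst_single_add_single (lowerShift_lt hd hdy).ne (lineAdj_lowerShift hd hdb hdy)

def bursts (n D b : ℕ) : Finset ((Fin D → Fin n) → ZMod 2) :=
  univ.image (fun x => Pi.single x 1) ∪ pairBursts n D b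

lemma isBurst_of_mem_bursts {e : (Fin D → Fin n) → ZMod 2} (he : e ∈ bursts n D b) :
    IsBurst b e := by
  rcases mem_union.1 he with he | he
  · obtain ⟨x, -, rfl⟩ := mem_image.1 he
    exact isBurst_single x
  · exact isBurst_of_mem_pairBursts he

lemma card_bursts : #(bursts n D b) = n ^ D + #(pairBursts n D b) := by
  have hweight (e : (Fin D → Fin n) → ZMod 2) (he : e ∈ pairBursts n D b) :
      #{i | e i ≠ 0} = 2 := by
    obtain ⟨⟨⟨t, d⟩, y⟩, hp, rfl⟩ := mem_image.1 he
    obtain ⟨hd, -, hdy⟩ := mem_pairIndex.1 hp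
    rw [filter_single_one_add_single_one_ne_zero (lowerShift_lt hd hdy).ne,
      card_pair (lowerShift_lt hd hdy).ne]
  have hsingle : Function.Injective fun x : Fin D → Fin n => (Pi.single x 1 : _ → ZMod 2) := by
    intro x y h
    have hsupp := congrArg (fun e : (Fin D → Fin n) → ZMod 2 => ({i | e i ≠ 0} : Finset _)) h
    simpa [filter_single_one_ne_zero] using hsupp
  rw [bursts, card_union_of_disjoint, card_image_of_injective _ hsingle, card_univ,
    Fintype.card_fun, Fintype.card_fin, Fintype.card_fin]
  refine disjoint_left.2 fun e he hpair => ?_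
  obtain ⟨x, -, rfl⟩ := mem_image.1 he
  simpa [filter_single_one_ne_zero] using hweight _ hpair

lemma le_two_mul_card_pairBursts (hb : 1 ≤ b) (hbn : b ≤ n) (hD : 1 ≤ D) :
    (b - 1) * D * n ^ D ≤ 2 * #(pairBursts n D b) := by
  have hsum := two_mul_sum_Icc_sub_add_mul n (b - 1) (by omega)
  rw [Nat.sub_add_cancel hb] at hsum
  have hA : n * (b - 1) ≤ 2 * ∑ d ∈ Icc 1 (b - 1), (n - d) := by
    nlinarith [Nat.mul_le_mul_left (b - 1) hbn]
  rw [card_pairBursts, card_pairIndex, ← Nat.sub_add_cancel hD, pow_succ, Nat.add_sub_cancel,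
    Nat.sub_add_cancel hD]
  calc (b - 1) * D * (n ^ (D - 1) * n) = D * (n * (b - 1)) * n ^ (D - 1) := by ring
    _ ≤ D * (2 * ∑ d ∈ Icc 1 (b - 1), (n - d)) * n ^ (D - 1) := by gcongr
    _ = _ := by ring

lemma le_card_bursts (hb : 1 ≤ b) (hbn : b ≤ n) (hD : 1 ≤ D) (h : D * (b ^ 2 - b) / 2 ≤ n) :
    (b - 1) * D * n ^ D ≤ #(bursts n D b) := by
  have hsum := two_mul_sum_Icc_sub_add_mul n (b - 1) (by omega)
  rw [Nat.sub_add_cancel hb] at hsum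
  have h2 : D * (b * (b - 1)) ≤ 2 * n := by
    have heven := (Nat.even_mul_pred_self b).two_dvd.mul_left D
    rw [sq, ← Nat.mul_sub_one] at h
    omega
  have hA : (b - 1) * D * n ≤ n + D * ∑ d ∈ Icc 1 (b - 1), (n - d) := by
    nlinarith
  rw [card_bursts, card_pairBursts, card_pairIndex, ← Nat.sub_add_cancel hD, pow_succ,
    Nat.add_sub_cancel, Nat.sub_add_cancel hD]
  calc (b - 1) * D * (n ^ (D - 1) * n) = (b - 1) * D * n * n ^ (D - 1) := by ring
    _ ≤ (n + D * ∑ d ∈ Icc 1 (b - 1), (n - d)) * n ^ (D - 1) := by gcongr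
    _ = _ := by ring

end StraightBurst

lemma logb_add_logb_sub_le_sub_ceil_logb {c D N r m : ℕ} (hc : 0 < c) (hD : 0 < D) (hN : 0 < N)
    (h : c * D * N ≤ 2 ^ (r + m)) :
    Real.logb 2 c + Real.logb 2 D - m - 1 ≤ r - ⌈Real.logb 2 N⌉ := by
  have hc' : (0 : ℝ) < c := by exact_mod_cast hc
  have hD' : (0 : ℝ) < D := by exact_mod_cast hD
  have hN' : (0 : ℝ) < N := by exact_mod_cast hN
  have hlog : Real.logb 2 (c * D * N) ≤ r + m := by
    rw [Real.logb_le_iff_le_rpow one_lt_two (by positivity), ← Nat.cast_add, Real.rpow_natCast]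
    exact_mod_cast h
  rw [Real.logb_mul (by positivity) (by positivity), Real.logb_mul (by positivity) (by positivity)]
    at hlog
  linarith [Int.ceil_lt_add_one (Real.logb 2 N)]

open StraightBurst in
/-- Let `D ≥ 1`, `n ≥ b ≥ 2`, and let `C ⊆ F_2^N`, `N = n^D`, be a linear code
correcting every 2-weight-limited `b`-burst in the straight model (all such error
vectors lie in distinct cosets of `C`).  Then the excess redundancy
`ξ(C) = (N - dim C) - ⌈log₂ N⌉` satisfies `ξ(C) ≥ log₂(b-1) + log₂ D - 2`;
moreover if `n ≥ D(b²-b)/2` then `ξ(C) ≥ log₂(b-1) + log₂ D - 1`. -/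
theorem stmt_15 (n b D : ℕ) (hb : 2 ≤ b) (hn : b ≤ n) (hD : 1 ≤ D)
    (C : Submodule (ZMod 2) ((Fin D → Fin n) → ZMod 2))
    (hcorr : ∀ e₁ ∈ {e : (Fin D → Fin n) → ZMod 2 |
        (Finset.univ.filter (fun i => e i ≠ 0)).card ≤ 2 ∧
        ∀ i ∈ Finset.univ.filter (fun i => e i ≠ 0),
          ∀ j ∈ Finset.univ.filter (fun i => e i ≠ 0), i ≠ j →
            ∃ t, i t ≠ j t ∧ (∀ t', t' ≠ t → i t' = j t') ∧
              |((i t : ℕ) : ℤ) - ((j t : ℕ) : ℤ)| ≤ (b : ℤ) - 1},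
      ∀ e₂ ∈ {e : (Fin D → Fin n) → ZMod 2 |
        (Finset.univ.filter (fun i => e i ≠ 0)).card ≤ 2 ∧
        ∀ i ∈ Finset.univ.filter (fun i => e i ≠ 0),
          ∀ j ∈ Finset.univ.filter (fun i => e i ≠ 0), i ≠ j →
            ∃ t, i t ≠ j t ∧ (∀ t', t' ≠ t → i t' = j t') ∧
              |((i t : ℕ) : ℤ) - ((j t : ℕ) : ℤ)| ≤ (b : ℤ) - 1},
        e₁ ≠ e₂ → e₁ - e₂ ∉ C) :
    (((n : ℝ) ^ D - Module.finrank (ZMod 2) C) - (⌈Real.logb 2 ((n : ℝ) ^ D)⌉ : ℝ)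
        ≥ Real.logb 2 ((b : ℝ) - 1) + Real.logb 2 D - 2) ∧
    (D * (b ^ 2 - b) / 2 ≤ n →
      ((n : ℝ) ^ D - Module.finrank (ZMod 2) C) - (⌈Real.logb 2 ((n : ℝ) ^ D)⌉ : ℝ)
        ≥ Real.logb 2 ((b : ℝ) - 1) + Real.logb 2 D - 1) := by
  have hdim : Module.finrank (ZMod 2) ((Fin D → Fin n) → ZMod 2) = n ^ D := by simp
  set r := n ^ D - Module.finrank (ZMod 2) C
  have hcard : #(bursts n D b) ≤ 2 ^ r := by
    simpa [hdim] using C.card_le_of_sub_notMem (bursts n D b) fun e₁ h₁ e₂ h₂ =>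
      hcorr e₁ (isBurst_of_mem_bursts h₁) e₂ (isBurst_of_mem_bursts h₂)
  have hr : (n : ℝ) ^ D - Module.finrank (ZMod 2) C = r := by
    rw [Nat.cast_sub (hdim ▸ C.finrank_le)]; push_cast; rfl
  have hb1 : (b : ℝ) - 1 = (b - 1 : ℕ) := by rw [Nat.cast_sub (by omega), Nat.cast_one]
  rw [hr, hb1, ← Nat.cast_pow]
  have hpos : 0 < n ^ D := pow_pos (by omega) D
  refine ⟨?_, fun h => ?_⟩
  · have := logb_add_logb_sub_le_sub_ceil_logb (r := r) (m := 1) (by omega) hD hpos <|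
      calc (b - 1) * D * n ^ D ≤ 2 * #(pairBursts n D b) :=
            le_two_mul_card_pairBursts (by omega) hn hD
        _ ≤ 2 * 2 ^ r := by gcongr; exact (card_le_card subset_union_right).trans hcard
        _ = 2 ^ (r + 1) := by ring
    rw [Nat.cast_one] at this; linarith
  · have := logb_add_logb_sub_le_sub_ceil_logb (r := r) (m := 0) (by omega) hD hpos
      ((le_card_bursts (by omega) hn hD h).trans hcard)
    rw [Nat.cast_zero] at this; linarith
end
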